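/- arXiv:1812.01759 — 2 statements merged into one kernel-verified Lean document; each statement's English description precedes it below -/
import Mathlib

section
/- The value function V_p is the predictable Snell envelope system of φ: it is the smallest predictable supermartingale system dominating φ. That is, if (V'(τ), τ ∈ T_0^p) is any admissible family satisfying V'(τ) ≥ φ(τ) a.s. for all predictable τ and E[V'(τ') | F_{τ⁻}] ≤ V'(τ) a.s. whenever τ ≤ τ' are predictable stopping times, then V_p(S) ≤ V'(S) a.s. for every predictable stopping time S. -/
open MeasureTheory Filter

variable {Ω : Type*} {m : MeasurableSpace Ω}

/-- A sequence of stopping times announcing the stopping time `τ`. -/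
def Announces (𝓕 : Filtration ℝ m) (τ : Ω → ℝ) (τs : ℕ → Ω → ℝ) : Prop :=
  (∀ n, IsStoppingTime 𝓕 (fun ω => ((τs n ω : ℝ) : WithTop ℝ))) ∧
  (∀ n ω, τs n ω ≤ τs (n + 1) ω) ∧
  (∀ n ω, τs n ω ≤ τ ω) ∧
  (∀ n ω, 0 < τ ω → τs n ω < τ ω) ∧
  (∀ ω, Tendsto (fun n => τs n ω) atTop (nhds (τ ω)))

/-- A predictable stopping time: a stopping time admitting an announcing sequence. -/
def IsPredST (𝓕 : Filtration ℝ m) (τ : Ω → ℝ) : Prop :=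
  IsStoppingTime 𝓕 (fun ω => ((τ ω : ℝ) : WithTop ℝ)) ∧ ∃ τs, Announces 𝓕 τ τs

/-- The σ-algebra `F_{τ⁻}`, generated by `F_0` and the sets `A ∩ {t < τ}`, `A ∈ F_t`. -/
def preMS (𝓕 : Filtration ℝ m) (τ : Ω → ℝ) : MeasurableSpace Ω :=
  𝓕 0 ⊔ MeasurableSpace.generateFrom
    {s | ∃ (t : ℝ) (A : Set Ω), MeasurableSet[𝓕 t] A ∧ s = A ∩ {ω | t < τ ω}}

/-- `T_0^p` : predictable stopping times with values in `[0, T]`. -/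
def T0 (𝓕 : Filtration ℝ m) (T : ℝ) : Set (Ω → ℝ) :=
  {τ | IsPredST 𝓕 τ ∧ ∀ ω, τ ω ∈ Set.Icc 0 T}

/-- `T_S^p` : predictable stopping times in `[0,T]` that dominate `S`. -/
def TS (𝓕 : Filtration ℝ m) (T : ℝ) (S : Ω → ℝ) : Set (Ω → ℝ) :=
  {τ ∈ T0 𝓕 T | ∀ ω, S ω ≤ τ ω}

/-- `T_{S⁺}^p` : predictable stopping times `τ` with `τ > S` on `{S < T}` and `τ = T` on `{S = T}`. -/
def TSplus (𝓕 : Filtration ℝ m) (T : ℝ) (S : Ω → ℝ) : Set (Ω → ℝ) :=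
  {τ ∈ T0 𝓕 T | (∀ ω, S ω < T → S ω < τ ω) ∧ (∀ ω, S ω = T → τ ω = T)}

/-- Predictable admissible reward family. -/
structure Admissible (𝓕 : Filtration ℝ m) (μ : Measure Ω) (T : ℝ)
    (φ : (Ω → ℝ) → Ω → ℝ) : Prop where
  nonneg : ∀ τ ∈ T0 𝓕 T, ∀ ω, 0 ≤ φ τ ω
  meas : ∀ τ ∈ T0 𝓕 T, Measurable[preMS 𝓕 τ] (φ τ)
  consistent : ∀ τ ∈ T0 𝓕 T, ∀ τ' ∈ T0 𝓕 T, ∀ᵐ ω ∂μ, τ ω = τ' ω → φ τ ω = φ τ' ω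

/-- `V` is (a version of) the essential supremum of the family `(g τ)_{τ ∈ 𝒯}`. -/
def IsEssSupFam (μ : Measure Ω) (g : (Ω → ℝ) → Ω → ℝ)
    (𝒯 : Set (Ω → ℝ)) (V : Ω → ℝ) : Prop :=
  (∀ τ ∈ 𝒯, g τ ≤ᵐ[μ] V) ∧ ∀ W : Ω → ℝ, (∀ τ ∈ 𝒯, g τ ≤ᵐ[μ] W) → V ≤ᵐ[μ] W

/-- `(V σ, S ≤ σ ≤ τ)` is a predictable martingale system on the stochastic interval `[S, τ]`. -/
def MartSysOn (𝓕 : Filtration ℝ m) (μ : Measure Ω) (T : ℝ)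
    (V : (Ω → ℝ) → Ω → ℝ) (S τ : Ω → ℝ) : Prop :=
  ∀ σ ∈ T0 𝓕 T, ∀ σ' ∈ T0 𝓕 T, (∀ ω, S ω ≤ σ ω) → (∀ ω, σ ω ≤ σ' ω) →
    (∀ ω, σ' ω ≤ τ ω) → μ[V σ'|preMS 𝓕 σ] =ᵐ[μ] V σ

theorem stmt7_general (μ : Measure Ω) (𝓕 : Filtration ℝ m) (T : ℝ)
    (φ : (Ω → ℝ) → Ω → ℝ)
    (hφint : ∀ τ ∈ T0 𝓕 T, Integrable (φ τ) μ)
    (V : (Ω → ℝ) → Ω → ℝ)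
    (hV : ∀ S ∈ T0 𝓕 T,
      IsEssSupFam μ (fun τ => μ[φ τ|preMS 𝓕 S]) (TS 𝓕 T S) (V S))
    (V' : (Ω → ℝ) → Ω → ℝ)
    (hV'int : ∀ τ ∈ T0 𝓕 T, Integrable (V' τ) μ)
    (hdom : ∀ τ ∈ T0 𝓕 T, φ τ ≤ᵐ[μ] V' τ)
    (hsuper : ∀ τ ∈ T0 𝓕 T, ∀ τ' ∈ T0 𝓕 T, (∀ ω, τ ω ≤ τ' ω) →
      μ[V' τ'|preMS 𝓕 τ] ≤ᵐ[μ] V' τ) :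
    ∀ S ∈ T0 𝓕 T, V S ≤ᵐ[μ] V' S := by
  intro S hS
  refine (hV S hS).2 _ fun τ ⟨hτ, hSτ⟩ => ?_
  calc μ[φ τ|preMS 𝓕 S] ≤ᵐ[μ] μ[V' τ|preMS 𝓕 S] :=
        condExp_mono (hφint τ hτ) (hV'int τ hτ) (hdom τ hτ)
    _ ≤ᵐ[μ] V' S := hsuper S hS τ hτ hSτ

theorem stmt7 (μ : Measure Ω) [IsProbabilityMeasure μ] (𝓕 : Filtration ℝ m) (T : ℝ)
    (φ : (Ω → ℝ) → Ω → ℝ) (hφ : Admissible 𝓕 μ T φ)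
    (hφint : ∀ τ ∈ T0 𝓕 T, Integrable (φ τ) μ)
    (V : (Ω → ℝ) → Ω → ℝ)
    (hV : ∀ S ∈ T0 𝓕 T,
      IsEssSupFam μ (fun τ => μ[φ τ|preMS 𝓕 S]) (TS 𝓕 T S) (V S))
    (V' : (Ω → ℝ) → Ω → ℝ) (hV'adm : Admissible 𝓕 μ T V')
    (hV'int : ∀ τ ∈ T0 𝓕 T, Integrable (V' τ) μ)
    (hdom : ∀ τ ∈ T0 𝓕 T, φ τ ≤ᵐ[μ] V' τ)
    (hsuper : ∀ τ ∈ T0 𝓕 T, ∀ τ' ∈ T0 𝓕 T, (∀ ω, τ ω ≤ τ' ω) →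
      μ[V' τ'|preMS 𝓕 τ] ≤ᵐ[μ] V' τ) :
    ∀ S ∈ T0 𝓕 T, V S ≤ᵐ[μ] V' S :=
  stmt7_general μ 𝓕 T φ hφint V hV V' hV'int hdom hsuper
end

section
/- Assume the value family V_p is uniformly integrable and admits left limits: for each predictable stopping time S announced by a sequence (S_n) of predictable stopping times increasing to S with S_n < S on {S > 0}, the limit V_p(S⁻) := lim_n V_p(S_n) exists a.s. Then V_p(S) ≤ V_p(S⁻) almost surely. -/
open MeasureTheory Filter

variable {Ω : Type*} {m : MeasurableSpace Ω}

/-!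
For `θ ≥ S` we also have `θ ≥ S_n`, so `E[φ θ | F_{S_n⁻}] ≤ V(S_n)` for every `n`. Since
`F_{S⁻} = ⋁ F_{S_n⁻}`, Lévy's upward theorem sends the left side to `E[φ θ | F_{S⁻}]` a.s., whence
`E[φ θ | F_{S⁻}] ≤ V(S⁻)`; taking the essential supremum over `θ` gives `V(S) ≤ V(S⁻)`.
-/

section PreMS

variable {𝓕 : Filtration ℝ m}

lemma measurableSet_lt_of_isStoppingTime {τ : Ω → ℝ}
    (hτ : IsStoppingTime 𝓕 (fun ω => ((τ ω : ℝ) : WithTop ℝ))) (t : ℝ) :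
    MeasurableSet[𝓕 t] {ω | t < τ ω} := by
  have h : {ω | t < τ ω} = {ω | ((τ ω : ℝ) : WithTop ℝ) ≤ t}ᶜ := by ext ω; simp
  exact h ▸ (hτ t).compl

lemma preMS_le {τ : Ω → ℝ} (hτ : IsStoppingTime 𝓕 (fun ω => ((τ ω : ℝ) : WithTop ℝ))) :
    preMS 𝓕 τ ≤ m := by
  refine sup_le (𝓕.le 0) (MeasurableSpace.generateFrom_le ?_)
  rintro s ⟨t, A, hA, rfl⟩
  exact 𝓕.le t _ (hA.inter (measurableSet_lt_of_isStoppingTime hτ t))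

lemma measurableSet_preMS {τ : Ω → ℝ} {t : ℝ} {A : Set Ω} (hA : MeasurableSet[𝓕 t] A) :
    MeasurableSet[preMS 𝓕 τ] (A ∩ {ω | t < τ ω}) :=
  le_sup_right (a := 𝓕 0) _ (MeasurableSpace.measurableSet_generateFrom ⟨t, A, hA, rfl⟩)

lemma preMS_mono {σ τ : Ω → ℝ} (hσ : IsStoppingTime 𝓕 (fun ω => ((σ ω : ℝ) : WithTop ℝ)))
    (h : ∀ ω, σ ω ≤ τ ω) : preMS 𝓕 σ ≤ preMS 𝓕 τ := by
  refine sup_le le_sup_left (MeasurableSpace.generateFrom_le ?_)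
  rintro s ⟨t, A, hA, rfl⟩
  -- `A ∩ {t < σ} = (A ∩ {t < σ}) ∩ {t < τ}`, and `A ∩ {t < σ}` is itself `𝓕 t`-measurable
  have hsub : {ω | t < σ ω} ⊆ {ω | t < τ ω} := fun ω hω => hω.trans_le (h ω)
  rw [← Set.inter_eq_left.2 (Set.inter_subset_right.trans hsub)]
  exact measurableSet_preMS (hA.inter (measurableSet_lt_of_isStoppingTime hσ t))

end PreMS

namespace Announces

variable {𝓕 : Filtration ℝ m} {S : Ω → ℝ} {Sn : ℕ → Ω → ℝ}

def filtration (h : Announces 𝓕 S Sn) : Filtration ℕ m where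
  seq n := preMS 𝓕 (Sn n)
  mono' := monotone_nat_of_le_succ fun n => preMS_mono (h.1 n) (h.2.1 n)
  le' n := preMS_le (h.1 n)

lemma iSup_filtration (h : Announces 𝓕 S Sn) : ⨆ n, h.filtration n = preMS 𝓕 S := by
  obtain ⟨hst, -, hle, -, hten⟩ := h
  refine le_antisymm (iSup_le fun n => preMS_mono (hst n) (hle n)) (sup_le ?_ ?_)
  · exact le_sup_left.trans (le_iSup (fun n => preMS 𝓕 (Sn n)) 0)
  · refine MeasurableSpace.generateFrom_le ?_
    rintro s ⟨t, A, hA, rfl⟩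
    have hunion : A ∩ {ω | t < S ω} = ⋃ n, A ∩ {ω | t < Sn n ω} := by
      ext ω
      simp only [Set.mem_inter_iff, Set.mem_iUnion, Set.mem_ofPred_eq]
      constructor
      · rintro ⟨hAω, ht⟩
        obtain ⟨n, hn⟩ := ((hten ω).eventually (eventually_gt_nhds ht)).exists
        exact ⟨n, hAω, hn⟩
      · rintro ⟨n, hAω, hn⟩
        exact ⟨hAω, hn.trans_le (hle n ω)⟩
    rw [hunion]
    exact MeasurableSet.iUnion fun n =>
      le_iSup (fun n => preMS 𝓕 (Sn n)) n _ (measurableSet_preMS hA)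

end Announces

lemma IsEssSupFam.ae_le_of_condExp_le_of_tendsto {μ : Measure Ω} [IsFiniteMeasure μ]
    {ℱ : Filtration ℕ m} {g : (Ω → ℝ) → Ω → ℝ} {𝒯 : Set (Ω → ℝ)} {V L : Ω → ℝ}
    (hV : IsEssSupFam μ (fun θ => μ[g θ|⨆ n, ℱ n]) 𝒯 V) {W : ℕ → Ω → ℝ}
    (hW : ∀ θ ∈ 𝒯, ∀ n, μ[g θ|ℱ n] ≤ᵐ[μ] W n)
    (hL : ∀ᵐ ω ∂μ, Tendsto (fun n => W n ω) atTop (nhds (L ω))) :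
    V ≤ᵐ[μ] L := by
  refine hV.2 L fun θ hθ => ?_
  filter_upwards [tendsto_ae_condExp (ℱ := ℱ) (g θ), hL, ae_all_iff.2 (hW θ hθ)]
    with ω hlevy hlim hle
  exact le_of_tendsto_of_tendsto' hlevy hlim hle

lemma TS_subset_TS {𝓕 : Filtration ℝ m} {T : ℝ} {σ σ' : Ω → ℝ} (h : ∀ ω, σ ω ≤ σ' ω) :
    TS 𝓕 T σ' ⊆ TS 𝓕 T σ :=
  fun _ hτ => ⟨hτ.1, fun ω => (h ω).trans (hτ.2 ω)⟩

theorem stmt11_general (μ : Measure Ω) [IsProbabilityMeasure μ] (𝓕 : Filtration ℝ m) (T : ℝ)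
    (φ : (Ω → ℝ) → Ω → ℝ)
    (V : (Ω → ℝ) → Ω → ℝ)
    (hV : ∀ σ ∈ T0 𝓕 T,
      IsEssSupFam μ (fun θ => μ[φ θ|preMS 𝓕 σ]) (TS 𝓕 T σ) (V σ))
    (S : Ω → ℝ) (hS : S ∈ T0 𝓕 T)
    (hAnn : ∃ Sn : ℕ → Ω → ℝ, (∀ n, Sn n ∈ T0 𝓕 T) ∧ Announces 𝓕 S Sn)
    (L : Ω → ℝ)
    (hL : ∀ Sn : ℕ → Ω → ℝ, (∀ n, Sn n ∈ T0 𝓕 T) → Announces 𝓕 S Sn →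
      ∀ᵐ ω ∂μ, Tendsto (fun n => V (Sn n) ω) atTop (nhds (L ω))) :
    V S ≤ᵐ[μ] L := by
  obtain ⟨Sn, hSn, hAnnS⟩ := hAnn
  have hVS := hV S hS
  rw [← hAnnS.iSup_filtration] at hVS
  refine hVS.ae_le_of_condExp_le_of_tendsto (fun θ hθ n => ?_) (hL Sn hSn hAnnS)
  exact (hV (Sn n) (hSn n)).1 θ (TS_subset_TS (hAnnS.2.2.1 n) hθ)

theorem stmt11 (μ : Measure Ω) [IsProbabilityMeasure μ] (𝓕 : Filtration ℝ m) (T : ℝ)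
    (φ : (Ω → ℝ) → Ω → ℝ) (hφ : Admissible 𝓕 μ T φ)
    (V : (Ω → ℝ) → Ω → ℝ)
    (hV : ∀ σ ∈ T0 𝓕 T,
      IsEssSupFam μ (fun θ => μ[φ θ|preMS 𝓕 σ]) (TS 𝓕 T σ) (V σ))
    (hVUI : UniformIntegrable (fun τ : T0 𝓕 T => V τ.1) 1 μ)
    (S : Ω → ℝ) (hS : S ∈ T0 𝓕 T)
    (hAnn : ∃ Sn : ℕ → Ω → ℝ, (∀ n, Sn n ∈ T0 𝓕 T) ∧ Announces 𝓕 S Sn)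
    (L : Ω → ℝ)
    (hL : ∀ Sn : ℕ → Ω → ℝ, (∀ n, Sn n ∈ T0 𝓕 T) → Announces 𝓕 S Sn →
      ∀ᵐ ω ∂μ, Tendsto (fun n => V (Sn n) ω) atTop (nhds (L ω))) :
    V S ≤ᵐ[μ] L :=
  stmt11_general μ 𝓕 T φ V hV S hS hAnn L hL
end
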